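/- Let E be a real inner product space, (Ω, μ) a probability space, f : E → ℝ an L-smooth function (L > 0) bounded below by f*, T ∈ ℕ with T ≥ 1, constants C ≥ 1, δ ≥ 0, Σ² ≥ 0, and η > 0 with η ≤ 1/(2·L·C). Let θ : ℕ → Ω → E and v : ℕ → Ω → E be sequences of random vectors with θ(t+1) = θ(t) − η·v(t) pointwise, with f ∘ θ(t), ‖∇f(θ(t))‖², ⟨∇f(θ(t)), v(t)⟩, and ‖v(t)‖² integrable for all t < T, and suppose for every t < T: (i) ∫ ⟨∇f(θ(t)), v(t)⟩ dμ ≥ (1/2)·∫ ‖∇f(θ(t))‖² dμ − (1/2)·δ and (ii) ∫ ‖v(t)‖² dμ ≤ C·∫ ‖∇f(θ(t))‖² dμ + Σ². Then min_{t<T} ∫ ‖∇f(θ(t))‖² dμ ≤ 4·(∫ f(θ(0)) dμ − f*)/(η·T) + 2·δ + 2·L·η·Σ². -/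

import Mathlib

open RealInnerProductSpace MeasureTheory

lemma descent_lemma {E : Type*} [NormedAddCommGroup E] [InnerProductSpace ℝ E] [CompleteSpace E]
    (f : E → ℝ) (L : ℝ) (hL : 0 < L) (hf : Differentiable ℝ f)
    (hlip : ∀ x y : E, ‖gradient f x - gradient f y‖ ≤ L * ‖x - y‖) (x y : E) :
    f y ≤ f x + ⟪gradient f x, y - x⟫ + L / 2 * ‖y - x‖ ^ 2 := by
  set d := y - x with hd
  have hgc : Continuous (gradient f) := by
    have : LipschitzWith ⟨L, hL.le⟩ (gradient f) := by
      apply LipschitzWith.of_dist_le_mul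
      intro a b
      rw [dist_eq_norm, dist_eq_norm]; exact hlip a b
    exact this.continuous
  have hderiv : ∀ t : ℝ, HasDerivAt (fun s : ℝ => f (x + s • d))
      ⟪gradient f (x + t • d), d⟫ t := by
    intro t
    have h1 : HasGradientAt f (gradient f (x + t • d)) (x + t • d) :=
      (hf _).hasGradientAt
    have h2 : HasDerivAt (fun s : ℝ => x + s • d) d t := by
      simpa using ((hasDerivAt_id t).smul_const d).const_add x
    have := h1.hasFDerivAt.comp_hasDerivAt t h2
    simpa [InnerProductSpace.toDual_apply_apply, Function.comp_def] using this
  have hcont : Continuous fun t : ℝ => ⟪gradient f (x + t • d), d⟫ := by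
    exact (hgc.comp (by continuity)).inner continuous_const
  have key : f y - f x = ∫ t in (0:ℝ)..1, ⟪gradient f (x + t • d), d⟫ := by
    rw [intervalIntegral.integral_eq_sub_of_hasDerivAt (fun t _ => hderiv t)
      (hcont.intervalIntegrable 0 1)]
    simp [hd]
  have hmono : ∫ t in (0:ℝ)..1, ⟪gradient f (x + t • d), d⟫ ≤
      ∫ t in (0:ℝ)..1, (⟪gradient f x, d⟫ + L * t * ‖d‖ ^ 2) := by
    apply intervalIntegral.integral_mono_on (by norm_num)
      (hcont.intervalIntegrable 0 1) (by apply Continuous.intervalIntegrable; continuity)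
    intro t ht
    have : ⟪gradient f (x + t • d) - gradient f x, d⟫ ≤ L * t * ‖d‖ ^ 2 := by
      calc ⟪gradient f (x + t • d) - gradient f x, d⟫
          ≤ ‖gradient f (x + t • d) - gradient f x‖ * ‖d‖ := real_inner_le_norm _ _
        _ ≤ (L * ‖(x + t • d) - x‖) * ‖d‖ := by
            exact mul_le_mul_of_nonneg_right (hlip _ _) (norm_nonneg _)
        _ = L * t * ‖d‖ ^ 2 := by
            rw [add_sub_cancel_left, norm_smul, Real.norm_eq_abs,
              abs_of_nonneg ht.1]; ring
    have := add_le_add_left this ⟪gradient f x, d⟫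
    simp only [inner_sub_left] at this; linarith
  have hval : ∫ t in (0:ℝ)..1, (⟪gradient f x, d⟫ + L * t * ‖d‖ ^ 2)
      = ⟪gradient f x, d⟫ + L / 2 * ‖d‖ ^ 2 := by
    rw [intervalIntegral.integral_add (by apply Continuous.intervalIntegrable; continuity)
      (by apply Continuous.intervalIntegrable; continuity)]
    simp only [intervalIntegral.integral_const, smul_eq_mul]
    have : ∫ t in (0:ℝ)..1, L * t * ‖d‖ ^ 2 = L / 2 * ‖d‖ ^ 2 := by
      have : (fun t : ℝ => L * t * ‖d‖ ^ 2) = fun t : ℝ => (L * ‖d‖ ^ 2) * t := by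
        funext t; ring
      rw [this, intervalIntegral.integral_const_mul, integral_id]
      ring
    rw [this]; ring
  linarith [key ▸ (hmono.trans_eq hval)]

/-- Stochastic form of Theorem 1 (Convergence of Hi-ZFO): for `L`-smooth `f` (`L > 0`)
bounded below by `f*`, random iterates `θ (t+1) = θ t - η • v t` (pointwise) over a
probability space `(Ω, μ)`, with the stated integrability assumptions and, for all
`t < T`, (i) `E⟪∇f(θ t), v t⟫ ≥ (1/2) E‖∇f(θ t)‖² - (1/2)δ` and
(ii) `E‖v t‖² ≤ C · E‖∇f(θ t)‖² + Σ²`, with step size `0 < η ≤ 1/(2LC)`,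
the minimum expected squared gradient norm over the first `T` iterations satisfies
`min_{t<T} E‖∇f(θ t)‖² ≤ 4(E[f(θ 0)] - f*)/(η T) + 2δ + 2 L η Σ²`. -/
theorem hi_zfo_convergence_stochastic
    {E : Type*} [NormedAddCommGroup E] [InnerProductSpace ℝ E] [CompleteSpace E]
    {Ω : Type*} [MeasurableSpace Ω] (μ : Measure Ω) [IsProbabilityMeasure μ]
    (f : E → ℝ) (L : ℝ) (hL : 0 < L) (hf : Differentiable ℝ f)
    (hlip : ∀ x y : E, ‖gradient f x - gradient f y‖ ≤ L * ‖x - y‖)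
    (fstar : ℝ) (hbdd : ∀ x, fstar ≤ f x)
    (T : ℕ) (hT : 1 ≤ T) (C δ σ2 η : ℝ)
    (hC : 1 ≤ C) (hδ : 0 ≤ δ) (hσ : 0 ≤ σ2) (hη : 0 < η)
    (hηle : η ≤ 1 / (2 * L * C))
    (θ v : ℕ → Ω → E)
    (hupd : ∀ t, ∀ ω, θ (t + 1) ω = θ t ω - η • v t ω)
    (hint_f : ∀ t < T, Integrable (fun ω => f (θ t ω)) μ)
    (hint_grad : ∀ t < T, Integrable (fun ω => ‖gradient f (θ t ω)‖ ^ 2) μ)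
    (hint_inner : ∀ t < T, Integrable (fun ω => ⟪gradient f (θ t ω), v t ω⟫) μ)
    (hint_v : ∀ t < T, Integrable (fun ω => ‖v t ω‖ ^ 2) μ)
    (h1 : ∀ t < T, ∫ ω, ⟪gradient f (θ t ω), v t ω⟫ ∂μ ≥
      1 / 2 * ∫ ω, ‖gradient f (θ t ω)‖ ^ 2 ∂μ - 1 / 2 * δ)
    (h2 : ∀ t < T, ∫ ω, ‖v t ω‖ ^ 2 ∂μ ≤
      C * ∫ ω, ‖gradient f (θ t ω)‖ ^ 2 ∂μ + σ2) :
    (Finset.range T).inf' (Finset.nonempty_range_iff.mpr (by omega))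
        (fun t => ∫ ω, ‖gradient f (θ t ω)‖ ^ 2 ∂μ) ≤
      4 * ((∫ ω, f (θ 0 ω) ∂μ) - fstar) / (η * T) + 2 * δ + 2 * L * η * σ2 := by
  set G : ℕ → ℝ := fun t => ∫ ω, ‖gradient f (θ t ω)‖ ^ 2 ∂μ with hG
  set A : ℕ → ℝ := fun t => ∫ ω, f (θ t ω) ∂μ with hA
  set I : ℕ → ℝ := fun t => ∫ ω, ⟪gradient f (θ t ω), v t ω⟫ ∂μ with hI
  set V : ℕ → ℝ := fun t => ∫ ω, ‖v t ω‖ ^ 2 ∂μ with hV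
  -- pointwise descent
  have hpt : ∀ t ω, f (θ (t + 1) ω) ≤
      f (θ t ω) - η * ⟪gradient f (θ t ω), v t ω⟫ + L / 2 * η ^ 2 * ‖v t ω‖ ^ 2 := by
    intro t ω
    have hd := descent_lemma f L hL hf hlip (θ t ω) (θ (t + 1) ω)
    have hsub : θ (t + 1) ω - θ t ω = -(η • v t ω) := by rw [hupd]; abel
    rw [hsub, inner_neg_right, real_inner_smul_right, norm_neg, norm_smul,
      Real.norm_eq_abs, abs_of_pos hη, mul_pow] at hd
    linarith [hd]
  -- integrated descent bound for R t
  have hRint : ∀ t < T, Integrable (fun ω =>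
      f (θ t ω) - η * ⟪gradient f (θ t ω), v t ω⟫ + L / 2 * η ^ 2 * ‖v t ω‖ ^ 2) μ :=
    fun t ht => ((hint_f t ht).sub ((hint_inner t ht).const_mul η)).add
      ((hint_v t ht).const_mul (L / 2 * η ^ 2))
  have hRval : ∀ t < T, (∫ ω, (f (θ t ω) - η * ⟪gradient f (θ t ω), v t ω⟫
      + L / 2 * η ^ 2 * ‖v t ω‖ ^ 2) ∂μ) = A t - η * I t + L / 2 * η ^ 2 * V t := by
    intro t ht
    have ha : Integrable (fun ω => f (θ t ω) - η * ⟪gradient f (θ t ω), v t ω⟫) μ :=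
      (hint_f t ht).sub ((hint_inner t ht).const_mul η)
    have hb : Integrable (fun ω => L / 2 * η ^ 2 * ‖v t ω‖ ^ 2) μ :=
      (hint_v t ht).const_mul (L / 2 * η ^ 2)
    have hc : Integrable (fun ω => η * ⟪gradient f (θ t ω), v t ω⟫) μ :=
      (hint_inner t ht).const_mul η
    rw [integral_add ha hb, integral_sub (hint_f t ht) hc,
      integral_const_mul, integral_const_mul]
  have hstep1 : ∀ t, t + 1 < T → A (t + 1) ≤ A t - η * I t + L / 2 * η ^ 2 * V t := by
    intro t ht
    have := integral_mono (hint_f (t + 1) ht) (hRint t (by omega)) (fun ω => hpt t ω)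
    rwa [hRval t (by omega)] at this
  have hstep2 : ∀ t, t + 1 = T → fstar ≤ A t - η * I t + L / 2 * η ^ 2 * V t := by
    intro t ht
    have hmono := integral_mono (integrable_const fstar) (hRint t (by omega))
      (fun ω => (hbdd (θ (t + 1) ω)).trans (hpt t ω))
    rwa [integral_const, probReal_univ, smul_eq_mul, one_mul,
      hRval t (by omega)] at hmono
  -- key per-step bound with B
  set B : ℕ → ℝ := fun t => if t < T then A t else fstar with hB
  have hGnonneg : ∀ t, 0 ≤ G t := fun t => integral_nonneg (fun ω => by positivity)
  have hLC : 2 * L * C * η ≤ 1 := by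
    rw [le_div_iff₀ (by positivity)] at hηle; linarith
  have hkey : ∀ t < T, η / 4 * G t ≤ B t - B (t + 1) + η * δ / 2 + L * η ^ 2 / 2 * σ2 := by
    intro t ht
    have hR : B (t + 1) ≤ A t - η * I t + L / 2 * η ^ 2 * V t := by
      by_cases h : t + 1 < T
      · simp only [hB, if_pos h]; exact hstep1 t h
      · simp only [hB, if_neg h]; exact hstep2 t (by omega)
    have hBt : B t = A t := by simp only [hB, if_pos ht]
    have hI1 := h1 t ht
    have hV1 := h2 t ht
    have hcoef : L / 2 * η ^ 2 * (C * G t) - η * (1 / 2 * G t) ≤ -(η / 4) * G t := by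
      have : (L / 2 * η ^ 2 * C - η / 2 + η / 4) * G t ≤ 0 :=
        mul_nonpos_of_nonpos_of_nonneg (by nlinarith) (hGnonneg t)
      nlinarith [this]
    have : B (t + 1) ≤ A t - η * (1 / 2 * G t - 1 / 2 * δ)
        + L / 2 * η ^ 2 * (C * G t + σ2) := by
      refine hR.trans ?_
      have h1' : -(η * I t) ≤ -(η * (1 / 2 * G t - 1 / 2 * δ)) := by
        have := mul_le_mul_of_nonneg_left hI1 hη.le
        linarith
      have h2' : L / 2 * η ^ 2 * V t ≤ L / 2 * η ^ 2 * (C * G t + σ2) :=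
        mul_le_mul_of_nonneg_left hV1 (by positivity)
      linarith
    rw [hBt]
    nlinarith [this, hcoef]
  -- sum over t < T
  have hsum : η / 4 * ∑ t ∈ Finset.range T, G t ≤
      (A 0 - fstar) + T * (η * δ / 2 + L * η ^ 2 / 2 * σ2) := by
    have hs := Finset.sum_le_sum (fun t ht => hkey t (Finset.mem_range.mp ht))
    rw [Finset.mul_sum]
    calc ∑ t ∈ Finset.range T, η / 4 * G t
        ≤ ∑ t ∈ Finset.range T, (B t - B (t + 1) + η * δ / 2 + L * η ^ 2 / 2 * σ2) := hs
      _ = (B 0 - B T) + T * (η * δ / 2 + L * η ^ 2 / 2 * σ2) := by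
          rw [Finset.sum_add_distrib, Finset.sum_add_distrib, Finset.sum_range_sub',
            Finset.sum_const, Finset.sum_const, Finset.card_range, nsmul_eq_mul,
            nsmul_eq_mul]
          ring
      _ = (A 0 - fstar) + T * (η * δ / 2 + L * η ^ 2 / 2 * σ2) := by
          simp only [hB, if_pos (by omega : 0 < T), if_neg (lt_irrefl T)]
  -- min ≤ average
  set m := (Finset.range T).inf' (Finset.nonempty_range_iff.mpr (by omega)) G with hm
  have hmle : (T : ℝ) * m ≤ ∑ t ∈ Finset.range T, G t := by
    have := Finset.card_nsmul_le_sum (Finset.range T) G m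
      (fun i hi => Finset.inf'_le G hi)
    rwa [Finset.card_range, nsmul_eq_mul] at this
  have hT0 : (0 : ℝ) < T := by exact_mod_cast hT
  have hfinal : η / 4 * ((T : ℝ) * m) ≤
      (A 0 - fstar) + T * (η * δ / 2 + L * η ^ 2 / 2 * σ2) :=
    le_trans (by nlinarith [hmle]) hsum
  have heq : ((A 0 - fstar) + (T : ℝ) * (η * δ / 2 + L * η ^ 2 / 2 * σ2)) / (η * T / 4)
      = 4 * (A 0 - fstar) / (η * T) + 2 * δ + 2 * L * η * σ2 := by
    field_simp
    ring
  have : m ≤ ((A 0 - fstar) + (T : ℝ) * (η * δ / 2 + L * η ^ 2 / 2 * σ2)) / (η * T / 4) := by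
    rw [le_div_iff₀ (by positivity)]
    nlinarith [hfinal]
  calc m ≤ _ := this
    _ = _ := heq
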